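/- After integrating out β, the identity π²/16 = 6 · ∫₀¹ ∫₀¹ 1 / ((1 + γ²)(1 + x²)) dγ dx − 6 · ∫₀¹ ∫₀¹ 1 / ((1 + x²)(1 + γ²·(2 + x²))) dγ dx holds. -/

import Mathlib

/-!
The first double integral factors as `(arctan 1)² = π²/16`. In the second one the inner integral
is `arctan √c / √c` with `c = 2 + x²`, and `arctan √c = π/2 - arctan (√c)⁻¹` splits it into
`π/2 · ∫₀¹ dx / ((1 + x²) √(2 + x²)) = π²/12` (antiderivative `arctan (x / √(2 + x²))`) minus
`K = ∫₀¹ arctan (√(2 + x²))⁻¹ / ((1 + x²) √(2 + x²)) dx`. Since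
`arctan (√c)⁻¹ / √c = ∫₀¹ dγ / (c + γ²)`, `K` is a double integral over the square; exchanging
the variables and decomposing `1 / ((1 + γ²)(2 + γ² + x²))` into partial fractions in `γ` turns it
into `π²/16 - K`, so `K = π²/32` and the second integral is `5π²/96`.
-/

open Real Set MeasureTheory

theorem integral_one_div_one_add_mul_sq {s : ℝ} (hs : s ≠ 0) (a b : ℝ) :
    ∫ γ in a..b, 1 / (1 + (s * γ) ^ 2) = (arctan (s * b) - arctan (s * a)) / s := by
  rw [intervalIntegral.integral_comp_mul_left (fun y => 1 / (1 + y ^ 2)) hs,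
    integral_one_div_one_add_sq, smul_eq_mul, inv_mul_eq_div]

theorem integral_one_div_one_add_sq_mul {c : ℝ} (hc : 0 < c) (a b : ℝ) :
    ∫ γ in a..b, 1 / (1 + γ ^ 2 * c) = (arctan (√c * b) - arctan (√c * a)) / √c := by
  have h (γ : ℝ) : γ ^ 2 * c = (√c * γ) ^ 2 := by rw [mul_pow, sq_sqrt hc.le, mul_comm]
  simp_rw [h, integral_one_div_one_add_mul_sq (sqrt_pos.2 hc).ne']

theorem integral_one_div_add_sq {c : ℝ} (hc : 0 < c) (a b : ℝ) :
    ∫ γ in a..b, 1 / (c + γ ^ 2) = (arctan (b / √c) - arctan (a / √c)) / √c := by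
  have hs := sqrt_pos.2 hc
  have h (γ : ℝ) : 1 / (c + γ ^ 2) = c⁻¹ * (1 / (1 + ((√c)⁻¹ * γ) ^ 2)) := by
    rw [mul_pow, inv_pow, sq_sqrt hc.le]
    field_simp
  simp_rw [h, intervalIntegral.integral_const_mul,
    integral_one_div_one_add_mul_sq (inv_ne_zero hs.ne'), inv_mul_eq_div]
  field_simp
  rw [sq_sqrt hc.le, mul_comm]

theorem hasDerivAt_arctan_div_sqrt_add_sq {a : ℝ} (ha : 0 < a) (x : ℝ) :
    HasDerivAt (fun x => arctan (x / √(a + x ^ 2)))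
      (a / ((a + 2 * x ^ 2) * √(a + x ^ 2))) x := by
  have hpos : 0 < a + x ^ 2 := by positivity
  have hs := sqrt_pos.2 hpos
  have hsqrt : HasDerivAt (fun x => √(a + x ^ 2)) (x / √(a + x ^ 2)) x := by
    convert ((hasDerivAt_pow 2 x).const_add a).sqrt hpos.ne' using 1
    simp only [Nat.cast_ofNat, Nat.add_one_sub_one, pow_one]
    field_simp
  refine ((hasDerivAt_id' x).fun_div hsqrt hs.ne').arctan.congr_deriv ?_
  field_simp
  rw [sq_sqrt hpos.le]
  ring

theorem integral_one_div_one_add_sq_mul_sqrt_two_add_sq :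
    ∫ x in (0:ℝ)..1, 1 / ((1 + x ^ 2) * √(2 + x ^ 2)) = π / 6 := by
  have hderiv (x : ℝ) : HasDerivAt (fun x => arctan (x / √(2 + x ^ 2)))
      (1 / ((1 + x ^ 2) * √(2 + x ^ 2))) x := by
    convert hasDerivAt_arctan_div_sqrt_add_sq two_pos x using 1
    field_simp
  rw [intervalIntegral.integral_eq_sub_of_hasDerivAt (fun x _ => hderiv x)
    (Continuous.intervalIntegrable (by fun_prop (disch := intros; positivity)) _ _)]
  norm_num [← arctan_inv_sqrt_three]

theorem intervalIntegral_integral_swap {f : ℝ → ℝ → ℝ} (hf : Continuous (Function.uncurry f))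
    {a b c d : ℝ} (hab : a ≤ b) (hcd : c ≤ d) :
    ∫ x in a..b, ∫ y in c..d, f x y = ∫ y in c..d, ∫ x in a..b, f x y := by
  have hint : IntegrableOn (Function.uncurry f) (Icc a b ×ˢ Icc c d) (volume.prod volume) := by
    rw [← Measure.volume_eq_prod]
    exact hf.continuousOn.integrableOn_compact (isCompact_Icc.prod isCompact_Icc)
  simp only [intervalIntegral.integral_of_le hab, intervalIntegral.integral_of_le hcd]
  refine integral_integral_swap ?_
  rw [Measure.prod_restrict]
  exact hint.mono_set (prod_mono Ioc_subset_Icc_self Ioc_subset_Icc_self)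

theorem integral_arctan_inv_sqrt_two_add_sq_div :
    ∫ x in (0:ℝ)..1, arctan (√(2 + x ^ 2))⁻¹ / ((1 + x ^ 2) * √(2 + x ^ 2)) = π ^ 2 / 32 := by
  set k : ℝ → ℝ := fun x => arctan (√(2 + x ^ 2))⁻¹ / ((1 + x ^ 2) * √(2 + x ^ 2)) with hk
  have hk_cont : Continuous k := by fun_prop (disch := intros; positivity)
  have inner (x : ℝ) : ∫ γ in (0:ℝ)..1, 1 / ((1 + x ^ 2) * (2 + x ^ 2 + γ ^ 2)) = k x := by
    simp only [← one_div_mul_one_div, intervalIntegral.integral_const_mul]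
    rw [integral_one_div_add_sq (by positivity), hk]
    simp only [one_div, zero_div, arctan_zero, sub_zero]
    field_simp
  have inner_swap (x : ℝ) : ∫ γ in (0:ℝ)..1, 1 / ((1 + γ ^ 2) * (2 + γ ^ 2 + x ^ 2)) =
      π / 4 * (1 / (1 + x ^ 2)) - k x := by
    have h (γ : ℝ) : 1 / ((1 + γ ^ 2) * (2 + γ ^ 2 + x ^ 2)) =
        1 / (1 + x ^ 2) * (1 / (1 + γ ^ 2)) - 1 / ((1 + x ^ 2) * (2 + x ^ 2 + γ ^ 2)) := by
      field_simp
      ring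
    simp_rw [h]
    rw [intervalIntegral.integral_sub, intervalIntegral.integral_const_mul,
      integral_one_div_one_add_sq, inner]
    · simp [mul_comm]
    all_goals exact Continuous.intervalIntegrable (by fun_prop (disch := intros; positivity)) _ _
  have hswap := intervalIntegral_integral_swap
    (f := fun x γ => 1 / ((1 + x ^ 2) * (2 + x ^ 2 + γ ^ 2)))
    (by fun_prop (disch := intros; positivity)) zero_le_one zero_le_one
  simp only [inner, inner_swap] at hswap
  rw [intervalIntegral.integral_sub
      (Continuous.intervalIntegrable (by fun_prop (disch := intros; positivity)) _ _)
      (hk_cont.intervalIntegrable _ _),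
    intervalIntegral.integral_const_mul, integral_one_div_one_add_sq] at hswap
  rw [arctan_one, arctan_zero, sub_zero] at hswap
  linarith

theorem integral_integral_one_div_one_add_sq_mul_one_add_sq :
    ∫ x in (0:ℝ)..1, ∫ γ in (0:ℝ)..1, 1 / ((1 + γ ^ 2) * (1 + x ^ 2)) = π ^ 2 / 16 := by
  simp only [← one_div_mul_one_div, intervalIntegral.integral_mul_const,
    intervalIntegral.integral_const_mul, integral_one_div_one_add_sq, arctan_one, arctan_zero]
  ring

theorem integral_integral_one_div_one_add_sq_mul_one_add_sq_mul_two_add_sq :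
    ∫ x in (0:ℝ)..1, ∫ γ in (0:ℝ)..1, 1 / ((1 + x ^ 2) * (1 + γ ^ 2 * (2 + x ^ 2)))
      = 5 * π ^ 2 / 96 := by
  have inner (x : ℝ) : ∫ γ in (0:ℝ)..1, 1 / ((1 + x ^ 2) * (1 + γ ^ 2 * (2 + x ^ 2))) =
      π / 2 * (1 / ((1 + x ^ 2) * √(2 + x ^ 2)))
        - arctan (√(2 + x ^ 2))⁻¹ / ((1 + x ^ 2) * √(2 + x ^ 2)) := by
    have hpos : 0 < 2 + x ^ 2 := by positivity
    simp only [← one_div_mul_one_div, intervalIntegral.integral_const_mul]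
    rw [integral_one_div_one_add_sq_mul hpos, arctan_inv_of_pos (sqrt_pos.2 hpos)]
    simp only [mul_one, mul_zero, arctan_zero, sub_zero]
    field_simp
    ring
  simp only [inner]
  rw [intervalIntegral.integral_sub, intervalIntegral.integral_const_mul,
    integral_one_div_one_add_sq_mul_sqrt_two_add_sq, integral_arctan_inv_sqrt_two_add_sq_div]
  · ring
  all_goals exact Continuous.intervalIntegrable (by fun_prop (disch := intros; positivity)) _ _

theorem after_beta_integration :
    Real.pi ^ 2 / 16
      = 6 * (∫ x in (0:ℝ)..1, ∫ γ in (0:ℝ)..1, 1 / ((1 + γ ^ 2) * (1 + x ^ 2)))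
        - 6 * ∫ x in (0:ℝ)..1, ∫ γ in (0:ℝ)..1,
            1 / ((1 + x ^ 2) * (1 + γ ^ 2 * (2 + x ^ 2))) := by
  rw [integral_integral_one_div_one_add_sq_mul_one_add_sq,
    integral_integral_one_div_one_add_sq_mul_one_add_sq_mul_two_add_sq]
  ring
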